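/- arXiv:1805.11872 — 3 statements merged into one kernel-verified Lean document; each statement's English description precedes it below -/
import Mathlib

section
/- Let (λ,ψ) be a symmetric non-trivial Bayes–Nash equilibrium of a crowdfunding game Γ(n,B,μ,p,τ) with 2 ≤ B ≤ n. Then: (i) if λ > 0 then ψ = 1; (ii) if ψ < 1 then λ = 0; (iii) if λ < 1 then φ(α_H,n−1,B−1) > φ(α_L,n−1,B−1); and (iv) if λ = 1 then φ(α_H,n−1,B−1) = φ(α_L,n−1,B−1) = 1. -/
/-!
A high signal raises the posterior, and `Uhigh - Ulow = (p_h - p_l) ((1 - τ) φ_H + τ φ_L)`,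
which is positive as soon as `α_H > 0`. So if low-signal players are willing to contribute,
high-signal players strictly prefer to, forcing `ψ = 1`; this gives (i) and (ii).
For (iii), non-triviality rules out `λ = ψ = 0`, so `λ < ψ` and
`α_H - α_L = (2p - 1)(ψ - λ) > 0`; the binomial upper tail `γ ↦ φ(γ, m, k)` is strictly
increasing on `[0, 1]` for `1 ≤ k ≤ m`, since its derivative telescopes to the single Bernstein
polynomial `m · b_{m-1,k-1}`. For (iv), `λ = ψ = 1` makes both success probabilities `1`.
-/

open Finset Filter

/-- Upper tail of a Binomial(m,γ): probability of at least `k` successes in `m` trials. -/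
noncomputable def phi (γ : ℝ) (m k : ℕ) : ℝ :=
  ∑ j ∈ Finset.Icc k m, (m.choose j : ℝ) * γ ^ j * (1 - γ) ^ (m - j)

/-- Posterior probability of state H given a low signal. -/
noncomputable def pLow (μ p : ℝ) : ℝ := (1 - p) * μ / ((1 - p) * μ + p * (1 - μ))

/-- Posterior probability of state H given a high signal. -/
noncomputable def pHigh (μ p : ℝ) : ℝ := p * μ / (p * μ + (1 - p) * (1 - μ))

/-- Probability that a player contributes in state H under symmetric strategy (lam, psi). -/
noncomputable def alphaH (p lam psi : ℝ) : ℝ := p * psi + (1 - p) * lam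

/-- Probability that a player contributes in state L under symmetric strategy (lam, psi). -/
noncomputable def alphaL (p lam psi : ℝ) : ℝ := (1 - p) * psi + p * lam

/-- Expected utility of contributing for a low-signal player. -/
noncomputable def Ulow (n B : ℕ) (μ p τ lam psi : ℝ) : ℝ :=
  pLow μ p * (1 - τ) * phi (alphaH p lam psi) (n - 1) (B - 1)
    - (1 - pLow μ p) * τ * phi (alphaL p lam psi) (n - 1) (B - 1)

/-- Expected utility of contributing for a high-signal player. -/
noncomputable def Uhigh (n B : ℕ) (μ p τ lam psi : ℝ) : ℝ :=
  pHigh μ p * (1 - τ) * phi (alphaH p lam psi) (n - 1) (B - 1)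
    - (1 - pHigh μ p) * τ * phi (alphaL p lam psi) (n - 1) (B - 1)

/-- (lam, psi) is a symmetric Bayes–Nash equilibrium of Γ(n,B,μ,p,τ). -/
def IsSymmEq (n B : ℕ) (μ p τ lam psi : ℝ) : Prop :=
  lam ∈ Set.Icc (0:ℝ) 1 ∧ psi ∈ Set.Icc (0:ℝ) 1 ∧
    (0 < lam → 0 ≤ Ulow n B μ p τ lam psi) ∧
    (lam < 1 → Ulow n B μ p τ lam psi ≤ 0) ∧
    (0 < psi → 0 ≤ Uhigh n B μ p τ lam psi) ∧
    (psi < 1 → Uhigh n B μ p τ lam psi ≤ 0)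

/-- The strategy profile (lam, psi) is non-trivial: the good is supplied with
positive probability. -/
def NonTrivial (n B : ℕ) (μ p lam psi : ℝ) : Prop :=
  0 < μ * phi (alphaH p lam psi) n B + (1 - μ) * phi (alphaL p lam psi) n B

/-- The correctness index of Γ(n,B,μ,p,τ) at the symmetric strategy (lam, psi). -/
noncomputable def thetaIdx (n B : ℕ) (μ p lam psi : ℝ) : ℝ :=
  μ * phi (alphaH p lam psi) n B + (1 - μ) * (1 - phi (alphaL p lam psi) n B)

/-- Expected fraction of contributors collected from a Binomial(n,γ) number of
contributors, counted only when the threshold B is met. -/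
noncomputable def tailExp (γ : ℝ) (n B : ℕ) : ℝ :=
  ∑ j ∈ Finset.Icc B n, ((j : ℝ) / n) * (n.choose j : ℝ) * γ ^ j * (1 - γ) ^ (n - j)

/-- The participation index of Γ(n,B,μ,p,τ) at the symmetric strategy (lam, psi). -/
noncomputable def partIdx (n B : ℕ) (μ p lam psi : ℝ) : ℝ :=
  μ * tailExp (alphaH p lam psi) n B + (1 - μ) * tailExp (alphaL p lam psi) n B

open Polynomial

theorem derivative_sum_bernsteinPolynomial_Icc (R : Type*) [CommRing R] {M k : ℕ} (hk : k ≤ M) :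
    derivative (∑ j ∈ Icc (k + 1) (M + 1), bernsteinPolynomial R (M + 1) j) =
      (M + 1) * bernsteinPolynomial R M k := by
  rw [← Ico_add_one_right_eq_Icc, ← sum_Ico_add', derivative_sum]
  simp only [bernsteinPolynomial.derivative_succ_aux, ← mul_sum]
  have telescope := sum_Ico_sub (fun j => -bernsteinPolynomial R M j) (Nat.le_succ_of_le hk)
  simp only [neg_sub_neg, bernsteinPolynomial.eq_zero_of_lt R (Nat.lt_succ_self M)] at telescope
  rw [telescope, sub_zero]

theorem bernsteinPolynomial_eval_pos {n ν : ℕ} (h : ν ≤ n) {x : ℝ} (hx : x ∈ Set.Ioo 0 1) :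
    0 < (bernsteinPolynomial ℝ n ν).eval x := by
  have hx' : 0 < 1 - x := sub_pos.2 hx.2
  have := hx.1
  have := Nat.choose_pos h
  simp only [bernsteinPolynomial, eval_mul, eval_pow, eval_sub, eval_one, eval_X, eval_natCast]
  positivity

theorem phi_eq_eval (γ : ℝ) (m k : ℕ) :
    phi γ m k = (∑ j ∈ Icc k m, bernsteinPolynomial ℝ m j).eval γ := by
  simp [phi, bernsteinPolynomial, eval_finsetSum]

theorem phi_zero {m k : ℕ} (hk : 1 ≤ k) : phi 0 m k = 0 := by
  rw [phi_eq_eval, eval_finsetSum]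
  refine sum_eq_zero fun j hj => ?_
  rw [bernsteinPolynomial.eval_at_0, if_neg (by simp at hj; omega)]

theorem phi_one {m k : ℕ} (hkm : k ≤ m) : phi 1 m k = 1 := by
  rw [phi_eq_eval, eval_finsetSum]
  simp [bernsteinPolynomial.eval_at_1, hkm]

theorem phi_nonneg {γ : ℝ} (hγ : γ ∈ Set.Icc 0 1) (m k : ℕ) : 0 ≤ phi γ m k := by
  have := sub_nonneg.2 hγ.2
  have := hγ.1
  unfold phi
  positivity

theorem phi_pos {γ : ℝ} (hγ : γ ∈ Set.Ioc 0 1) {m k : ℕ} (hkm : k ≤ m) : 0 < phi γ m k := by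
  have := sub_nonneg.2 hγ.2
  have := hγ.1
  refine sum_pos' (fun j _ => by positivity) ⟨m, mem_Icc.2 ⟨hkm, le_rfl⟩, ?_⟩
  simp only [Nat.choose_self, Nat.cast_one, one_mul, Nat.sub_self, pow_zero, mul_one]
  positivity

theorem phi_strictMonoOn {m k : ℕ} (hk : 1 ≤ k) (hkm : k ≤ m) :
    StrictMonoOn (fun γ => phi γ m k) (Set.Icc 0 1) := by
  obtain ⟨M, rfl⟩ : ∃ M, m = M + 1 := ⟨m - 1, by omega⟩
  obtain ⟨k, rfl⟩ : ∃ k', k = k' + 1 := ⟨k - 1, by omega⟩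
  simp only [phi_eq_eval]
  refine strictMonoOn_of_deriv_pos (convex_Icc 0 1) (Polynomial.continuousOn _) fun x hx => ?_
  rw [interior_Icc] at hx
  rw [Polynomial.deriv, derivative_sum_bernsteinPolynomial_Icc ℝ (by omega)]
  simpa using mul_pos (by positivity : (0 : ℝ) < M + 1) (bernsteinPolynomial_eval_pos (by omega) hx)

theorem pLow_lt_pHigh {μ p : ℝ} (hμ : μ ∈ Set.Ioo 0 1) (hp : p ∈ Set.Ioc (1 / 2) 1) :
    pLow μ p < pHigh μ p := by
  obtain ⟨hμ0, hμ1⟩ := hμ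
  obtain ⟨hp0, hp1⟩ := hp
  rw [pLow, pHigh, div_lt_div_iff₀ (by nlinarith) (by nlinarith)]
  nlinarith [mul_pos (mul_pos hμ0 (sub_pos.2 hμ1)) (by linarith : (0 : ℝ) < 2 * p - 1)]

theorem alphaH_mem_Icc {p lam psi : ℝ} (hp : p ∈ Set.Icc 0 1) (hlam : lam ∈ Set.Icc 0 1)
    (hpsi : psi ∈ Set.Icc 0 1) : alphaH p lam psi ∈ Set.Icc 0 1 := by
  obtain ⟨hp0, hp1⟩ := hp
  obtain ⟨hl0, hl1⟩ := hlam
  obtain ⟨hs0, hs1⟩ := hpsi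
  constructor <;> unfold alphaH <;> nlinarith

theorem alphaL_mem_Icc {p lam psi : ℝ} (hp : p ∈ Set.Icc 0 1) (hlam : lam ∈ Set.Icc 0 1)
    (hpsi : psi ∈ Set.Icc 0 1) : alphaL p lam psi ∈ Set.Icc 0 1 := by
  convert alphaH_mem_Icc ⟨sub_nonneg.2 hp.2, sub_le_self 1 hp.1⟩ hlam hpsi using 1
  unfold alphaL alphaH; ring

theorem alphaH_sub_alphaL (p lam psi : ℝ) :
    alphaH p lam psi - alphaL p lam psi = (2 * p - 1) * (psi - lam) := by
  unfold alphaH alphaL; ring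

theorem Uhigh_sub_Ulow (n B : ℕ) (μ p τ lam psi : ℝ) :
    Uhigh n B μ p τ lam psi - Ulow n B μ p τ lam psi =
      (pHigh μ p - pLow μ p) * ((1 - τ) * phi (alphaH p lam psi) (n - 1) (B - 1) +
        τ * phi (alphaL p lam psi) (n - 1) (B - 1)) := by
  unfold Uhigh Ulow; ring

theorem not_nonTrivial_zero_zero {n B : ℕ} (hB : 1 ≤ B) (μ p : ℝ) : ¬ NonTrivial n B μ p 0 0 := by
  simp [NonTrivial, alphaH, alphaL, phi_zero hB]

section Equilibrium

variable {n B : ℕ} {μ p τ lam psi : ℝ}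

theorem IsSymmEq.psi_eq_one_of_pos (heq : IsSymmEq n B μ p τ lam psi) (hB : B ≤ n)
    (hμ : μ ∈ Set.Ioo 0 1) (hp : p ∈ Set.Ioo (1 / 2) 1) (hτ : τ ∈ Set.Ioo 0 1) (hlam : 0 < lam) :
    psi = 1 := by
  obtain ⟨hlamI, hpsiI, hUlow, -, -, hUhigh⟩ := heq
  by_contra hpsi
  have hpI : p ∈ Set.Icc 0 1 := ⟨by linarith [hp.1], hp.2.le⟩
  have hαH : alphaH p lam psi ∈ Set.Ioc 0 1 :=
    ⟨add_pos_of_nonneg_of_pos (mul_nonneg hpI.1 hpsiI.1) (mul_pos (sub_pos.2 hp.2) hlam),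
      (alphaH_mem_Icc hpI hlamI hpsiI).2⟩
  have hφH := phi_pos hαH (Nat.sub_le_sub_right hB 1)
  have hφL := phi_nonneg (alphaL_mem_Icc hpI hlamI hpsiI) (n - 1) (B - 1)
  have hU : Ulow n B μ p τ lam psi < Uhigh n B μ p τ lam psi := by
    rw [← sub_pos, Uhigh_sub_Ulow]
    refine mul_pos (sub_pos.2 (pLow_lt_pHigh hμ ⟨hp.1, hp.2.le⟩)) ?_
    nlinarith [hτ.1, hτ.2]
  linarith [hUlow hlam, hUhigh (lt_of_le_of_ne hpsiI.2 hpsi)]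

theorem IsSymmEq.lam_lt_psi (heq : IsSymmEq n B μ p τ lam psi) (hnt : NonTrivial n B μ p lam psi)
    (hB : 1 ≤ B) (hpsi : psi < 1 → lam = 0) (hlam : lam < 1) : lam < psi := by
  rcases heq.2.1.2.eq_or_lt with rfl | hpsi1
  · exact hlam
  obtain rfl := hpsi hpsi1
  refine heq.2.1.1.lt_of_ne fun hpsi0 => ?_
  subst hpsi0
  exact not_nonTrivial_zero_zero hB μ p hnt

end Equilibrium

/-- structural properties of symmetric non-trivial equilibria. -/
theorem stmt2 (n B : ℕ) (μ p τ : ℝ) (hB1 : 2 ≤ B) (hB2 : B ≤ n)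
    (hμ : μ ∈ Set.Ioo (0:ℝ) 1) (hp : p ∈ Set.Ioo (1/2 : ℝ) 1) (hτ : τ ∈ Set.Ioo (0:ℝ) 1)
    (lam psi : ℝ)
    (heq : IsSymmEq n B μ p τ lam psi) (hnt : NonTrivial n B μ p lam psi) :
    (0 < lam → psi = 1) ∧
    (psi < 1 → lam = 0) ∧
    (lam < 1 →
      phi (alphaL p lam psi) (n - 1) (B - 1) < phi (alphaH p lam psi) (n - 1) (B - 1)) ∧
    (lam = 1 →
      phi (alphaH p lam psi) (n - 1) (B - 1) = 1 ∧
      phi (alphaL p lam psi) (n - 1) (B - 1) = 1) := by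
  have hpI : p ∈ Set.Icc 0 1 := ⟨by linarith [hp.1], hp.2.le⟩
  have hαH := alphaH_mem_Icc hpI heq.1 heq.2.1
  have hαL := alphaL_mem_Icc hpI heq.1 heq.2.1
  have part1 : 0 < lam → psi = 1 := heq.psi_eq_one_of_pos hB2 hμ hp hτ
  have part2 : psi < 1 → lam = 0 := fun hpsi =>
    by_contra fun hlam => hpsi.ne (part1 (heq.1.1.lt_of_ne' hlam))
  refine ⟨part1, part2, fun hlam => ?_, fun hlam => ?_⟩
  · refine phi_strictMonoOn (by omega) (by omega) hαL hαH ?_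
    rw [← sub_pos, alphaH_sub_alphaL]
    exact mul_pos (by linarith [hp.1]) (sub_pos.2 (heq.lam_lt_psi hnt (by omega) part2 hlam))
  · obtain rfl := part1 (hlam ▸ one_pos)
    subst hlam
    simp [alphaH, alphaL, phi_one (Nat.sub_le_sub_right hB2 1)]
end

section
/- Fix n ≥ 2, an integer B with 2 ≤ B ≤ n, μ ∈ (0,1), p ∈ (1/2,1), τ ∈ (0,1), and ψ ∈ [0,1]. Define f(λ) := p_l(1−τ)φ(pψ+(1−p)λ, n−1, B−1) − (1−p_l)τφ((1−p)ψ+pλ, n−1, B−1) for λ ∈ [0,1]. If λ₀ ∈ (0,1) satisfies λ₀ ≤ ψ and f(λ₀) = 0, then f(λ) > 0 for every λ ∈ [0,λ₀) and f(λ) < 0 for every λ ∈ (λ₀, ψ]. -/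
open Finset Filter

/-!
Write `f λ = A φ(αH λ) - C φ(αL λ)` with `A > 0`, where `αH, αL` are the contribution
probabilities in the two states. On `[0, ψ]` we have `0 < αL ≤ αH ≤ 1`, so
`f λ = A φ(αL λ) (R λ - R λ₀)` with `R = φ(αH) / φ(αL)`, and it suffices that `R` is strictly
decreasing. Its derivative has the sign of `(1 - p) φ'(αH) / φ(αH) - p φ'(αL) / φ(αL)`, which is
negative because `1 - p < p` and `φ' / φ` is antitone: `φ'(γ) = k C(m,k) γ^(k-1) (1-γ)^(m-k)`, and
the `j`-th term of `φ` divided by it is, up to a constant, `γ^(j-k+1) / (1-γ)^(j-k)`, which is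
increasing in `γ`.
-/

noncomputable def phiDeriv (m k : ℕ) (γ : ℝ) : ℝ :=
  k * (m.choose k : ℝ) * γ ^ (k - 1) * (1 - γ) ^ (m - k)

lemma hasDerivAt_binomial_term {m j : ℕ} (hj : j ≤ m) (γ : ℝ) :
    HasDerivAt (fun x : ℝ => (m.choose j : ℝ) * x ^ j * (1 - x) ^ (m - j))
      (phiDeriv m j γ - phiDeriv m (j + 1) γ) γ := by
  refine (((hasDerivAt_pow j γ).const_mul _).mul
    (((hasDerivAt_id' γ).const_sub 1).pow (m - j))).congr_deriv ?_
  have hchoose : (m.choose (j + 1) : ℝ) * (j + 1) = m.choose j * (m - j) := by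
    rw [← Nat.cast_sub hj]; exact_mod_cast Nat.choose_succ_right_eq m j
  have hexp : m - (j + 1) = m - j - 1 := by omega
  simp only [phiDeriv, hexp, Nat.add_sub_cancel, Nat.cast_sub hj, Pi.pow_apply]
  push_cast
  linear_combination γ ^ j * (1 - γ) ^ (m - j - 1) * hchoose

lemma hasDerivAt_phi {m k : ℕ} (hk : k ≤ m) (γ : ℝ) :
    HasDerivAt (fun x => phi x m k) (phiDeriv m k γ) γ := by
  have hsum := HasDerivAt.fun_sum (u := Icc k m) fun j hj =>
    hasDerivAt_binomial_term (mem_Icc.1 hj).2 γ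
  have htop : phiDeriv m (m + 1) γ = 0 := by simp [phiDeriv]
  have htel : ∑ j ∈ Icc k m, (phiDeriv m j γ - phiDeriv m (j + 1) γ) = phiDeriv m k γ := by
    rw [← neg_inj, ← Finset.sum_neg_distrib]
    simp only [neg_sub]
    rw [Finset.sum_Icc_sub hk (phiDeriv m · γ), htop, zero_sub]
  rwa [htel] at hsum

@[fun_prop]
lemma continuous_phi (m k : ℕ) : Continuous fun γ => phi γ m k := by
  unfold phi; fun_prop

lemma phi_pos_s3 {γ : ℝ} (h0 : 0 < γ) (h1 : γ ≤ 1) {m k : ℕ} (hk : k ≤ m) : 0 < phi γ m k := by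
  have h1γ : 0 ≤ 1 - γ := sub_nonneg.2 h1
  refine sum_pos' (fun j _ => by positivity) ⟨m, mem_Icc.2 ⟨hk, le_rfl⟩, ?_⟩
  simp only [Nat.choose_self, Nat.cast_one, one_mul, Nat.sub_self, pow_zero, mul_one]
  positivity

lemma phiDeriv_pos {m k : ℕ} (hk1 : 1 ≤ k) (hkm : k ≤ m) {γ : ℝ} (h0 : 0 < γ) (h1 : γ < 1) :
    0 < phiDeriv m k γ := by
  have h1γ : 0 < 1 - γ := sub_pos.2 h1
  have hchoose : (0 : ℝ) < m.choose k := by exact_mod_cast Nat.choose_pos hkm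
  have hk : (0 : ℝ) < k := by exact_mod_cast hk1
  unfold phiDeriv
  positivity

lemma pow_succ_mul_one_sub_pow_le {x y : ℝ} (hx : 0 ≤ x) (hxy : x ≤ y) (hy : y ≤ 1) (i : ℕ) :
    x ^ (i + 1) * (1 - y) ^ i ≤ y ^ (i + 1) * (1 - x) ^ i := by
  have h1y : 0 ≤ 1 - y := by linarith
  have hy0 : 0 ≤ y := hx.trans hxy
  calc x ^ (i + 1) * (1 - y) ^ i = x * (x * (1 - y)) ^ i := by rw [mul_pow]; ring
    _ ≤ y * (y * (1 - x)) ^ i := by gcongr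
    _ = y ^ (i + 1) * (1 - x) ^ i := by rw [mul_pow]; ring

lemma pow_mul_one_sub_pow_mul_le {x y : ℝ} (hx : 0 ≤ x) (hxy : x ≤ y) (hy : y ≤ 1) (k i r : ℕ) :
    y ^ k * (1 - y) ^ (i + r) * (x ^ (k + 1 + i) * (1 - x) ^ r) ≤
      x ^ k * (1 - x) ^ (i + r) * (y ^ (k + 1 + i) * (1 - y) ^ r) := by
  have h1x : 0 ≤ 1 - x := by linarith
  have h1y : 0 ≤ 1 - y := by linarith
  have hc : 0 ≤ x ^ k * y ^ k * (1 - x) ^ r * (1 - y) ^ r := by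
    have := hx.trans hxy
    positivity
  refine ((mul_le_mul_of_nonneg_left (pow_succ_mul_one_sub_pow_le hx hxy hy i) hc).trans_eq'
    ?_).trans_eq ?_
  all_goals ring

lemma phiDeriv_mul_phi_le {m k : ℕ} {x y : ℝ} (hx : 0 ≤ x) (hxy : x ≤ y) (hy : y ≤ 1) :
    phiDeriv m k y * phi x m k ≤ phiDeriv m k x * phi y m k := by
  rcases k with _ | k
  · simp [phiDeriv]
  have key : y ^ k * (1 - y) ^ (m - (k + 1)) * phi x m (k + 1) ≤
      x ^ k * (1 - x) ^ (m - (k + 1)) * phi y m (k + 1) := by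
    simp only [phi, mul_sum]
    refine sum_le_sum fun j hj => ?_
    obtain ⟨hkj, hjm⟩ := mem_Icc.1 hj
    obtain ⟨i, rfl⟩ := Nat.exists_eq_add_of_le hkj
    obtain ⟨r, rfl⟩ := Nat.exists_eq_add_of_le hjm
    rw [show k + 1 + i + r - (k + 1) = i + r by omega,
      show k + 1 + i + r - (k + 1 + i) = r by omega]
    refine ((mul_le_mul_of_nonneg_left (pow_mul_one_sub_pow_mul_le hx hxy hy k i r)
      (Nat.cast_nonneg ((k + 1 + i + r).choose (k + 1 + i)))).trans_eq' ?_).trans_eq ?_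
    all_goals ring
  refine ((mul_le_mul_of_nonneg_left key
    (by positivity : (0 : ℝ) ≤ (k + 1 : ℕ) * m.choose (k + 1))).trans_eq' ?_).trans_eq ?_
  all_goals simp only [phiDeriv, Nat.add_sub_cancel]; ring

section Alpha

variable {p lam ψ : ℝ}

lemma alphaL_pos (hp0 : 0 ≤ p) (hp1 : p < 1) (hlam : 0 ≤ lam) (hψ : 0 < ψ) :
    0 < alphaL p lam ψ := by
  unfold alphaL; nlinarith

lemma alphaL_lt (hp : 0 < p) (hlam : lam < ψ) : alphaL p lam ψ < ψ := by
  unfold alphaL; nlinarith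

lemma alphaL_le_alphaH (hp : 1 / 2 ≤ p) (hlam : lam ≤ ψ) : alphaL p lam ψ ≤ alphaH p lam ψ := by
  unfold alphaL alphaH; nlinarith

lemma alphaH_le_one (hp : p ≤ 1) (hlam : lam ≤ ψ) (hψ : ψ ≤ 1) :
    alphaH p lam ψ ≤ 1 := by
  unfold alphaH; nlinarith

variable {m k : ℕ}

lemma phi_alphaL_pos (hkm : k ≤ m) (hp : p ∈ Set.Ioo (1 / 2 : ℝ) 1) (hψ0 : 0 < ψ) (hψ1 : ψ ≤ 1)
    (hlam : lam ∈ Set.Icc 0 ψ) : 0 < phi (alphaL p lam ψ) m k :=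
  have hp0 : 0 ≤ p := by linarith [hp.1]
  phi_pos_s3 (alphaL_pos hp0 hp.2 hlam.1 hψ0)
    ((alphaL_le_alphaH hp.1.le hlam.2).trans (alphaH_le_one hp.2.le hlam.2 hψ1)) hkm

lemma phi_alphaH_pos (hkm : k ≤ m) (hp : p ∈ Set.Ioo (1 / 2 : ℝ) 1) (hψ0 : 0 < ψ) (hψ1 : ψ ≤ 1)
    (hlam : lam ∈ Set.Icc 0 ψ) : 0 < phi (alphaH p lam ψ) m k :=
  have hp0 : 0 ≤ p := by linarith [hp.1]
  phi_pos_s3 ((alphaL_pos hp0 hp.2 hlam.1 hψ0).trans_le (alphaL_le_alphaH hp.1.le hlam.2))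
    (alphaH_le_one hp.2.le hlam.2 hψ1) hkm

lemma strictAntiOn_phi_alphaH_div_phi_alphaL (hk : 1 ≤ k) (hkm : k ≤ m)
    (hp : p ∈ Set.Ioo (1 / 2 : ℝ) 1) (hψ0 : 0 < ψ) (hψ1 : ψ ≤ 1) :
    StrictAntiOn (fun lam => phi (alphaH p lam ψ) m k / phi (alphaL p lam ψ) m k)
      (Set.Icc 0 ψ) := by
  have hp0 : 0 ≤ p := by linarith [hp.1]
  apply strictAntiOn_of_deriv_neg (convex_Icc 0 ψ)
  · refine ContinuousOn.div ?_ ?_ fun lam hlam => (phi_alphaL_pos hkm hp hψ0 hψ1 hlam).ne'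
    · unfold alphaH; fun_prop
    · unfold alphaL; fun_prop
  intro lam hlam
  rw [interior_Icc] at hlam
  have hlam' : lam ∈ Set.Icc 0 ψ := Set.Ioo_subset_Icc_self hlam
  have hH : HasDerivAt (fun l => phi (alphaH p l ψ) m k)
      (phiDeriv m k (alphaH p lam ψ) * ((1 - p) * 1)) lam :=
    (hasDerivAt_phi hkm _).comp lam (((hasDerivAt_id' lam).const_mul (1 - p)).const_add (p * ψ))
  have hL : HasDerivAt (fun l => phi (alphaL p l ψ) m k)
      (phiDeriv m k (alphaL p lam ψ) * (p * 1)) lam :=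
    (hasDerivAt_phi hkm _).comp lam (((hasDerivAt_id' lam).const_mul p).const_add ((1 - p) * ψ))
  have hφL := phi_alphaL_pos hkm hp hψ0 hψ1 hlam'
  have hφH := phi_alphaH_pos hkm hp hψ0 hψ1 hlam'
  rw [(hH.fun_div hL hφL.ne').deriv]
  refine div_neg_of_neg_of_pos ?_ (by positivity)
  have hαL := alphaL_pos hp0 hp.2 hlam'.1 hψ0
  have hDL : 0 < phiDeriv m k (alphaL p lam ψ) :=
    phiDeriv_pos hk hkm hαL ((alphaL_lt (by linarith [hp.1]) hlam.2).trans_le hψ1)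
  have hcross : phiDeriv m k (alphaH p lam ψ) * phi (alphaL p lam ψ) m k ≤
      phiDeriv m k (alphaL p lam ψ) * phi (alphaH p lam ψ) m k :=
    phiDeriv_mul_phi_le hαL.le (alphaL_le_alphaH hp.1.le hlam'.2)
      (alphaH_le_one hp.2.le hlam'.2 hψ1)
  nlinarith [mul_le_mul_of_nonneg_left hcross (by linarith [hp.2] : (0 : ℝ) ≤ 1 - p),
    mul_pos (mul_pos hDL hφH) (by linarith [hp.1] : (0 : ℝ) < 2 * p - 1)]

end Alpha

lemma sign_sub_of_strictAntiOn_div {g h : ℝ → ℝ} {s : Set ℝ}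
    (hgh : StrictAntiOn (fun x => g x / h x) s) (hh : ∀ x ∈ s, 0 < h x)
    {a c x₀ : ℝ} (ha : 0 < a) (hx₀ : x₀ ∈ s) (hroot : a * g x₀ - c * h x₀ = 0) :
    ∀ x ∈ s, (x < x₀ → 0 < a * g x - c * h x) ∧ (x₀ < x → a * g x - c * h x < 0) := by
  intro x hx
  have hfactor : a * g x - c * h x = a * h x * (g x / h x - g x₀ / h x₀) := by
    have := (hh x hx).ne'
    have := (hh x₀ hx₀).ne'
    field_simp
    linear_combination h x * hroot
  have hpos : 0 < a * h x := mul_pos ha (hh x hx)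
  rw [hfactor]
  exact ⟨fun hlt => mul_pos hpos (sub_pos.2 (hgh hx hx₀ hlt)),
    fun hlt => mul_neg_of_pos_of_neg hpos (sub_neg.2 (hgh hx₀ hx hlt))⟩

lemma pLow_pos {μ p : ℝ} (hμ0 : 0 < μ) (hμ1 : μ ≤ 1) (hp0 : 0 ≤ p) (hp1 : p < 1) :
    0 < pLow μ p := by
  have hnum : 0 < (1 - p) * μ := mul_pos (sub_pos.2 hp1) hμ0
  exact div_pos hnum (by nlinarith)

theorem stmt3_general (n B : ℕ) (μ p τ ψ : ℝ) (hB1 : 2 ≤ B) (hB2 : B ≤ n)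
    (hμ : μ ∈ Set.Ioo (0:ℝ) 1) (hp : p ∈ Set.Ioo (1/2 : ℝ) 1) (hτ : τ ∈ Set.Ioo (0:ℝ) 1)
    (hψ : ψ ∈ Set.Icc (0:ℝ) 1)
    (f : ℝ → ℝ)
    (hf : ∀ lam, f lam =
      pLow μ p * (1 - τ) * phi (p * ψ + (1 - p) * lam) (n - 1) (B - 1)
        - (1 - pLow μ p) * τ * phi ((1 - p) * ψ + p * lam) (n - 1) (B - 1))
    (lam0 : ℝ) (hlam0 : lam0 ∈ Set.Ioo (0:ℝ) 1) (hle : lam0 ≤ ψ) (hroot : f lam0 = 0) :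
    (∀ lam, 0 ≤ lam → lam < lam0 → 0 < f lam) ∧
    (∀ lam, lam0 < lam → lam ≤ ψ → f lam < 0) := by
  have hk : 1 ≤ B - 1 := by omega
  have hkm : B - 1 ≤ n - 1 := by omega
  have hψ0 : 0 < ψ := hlam0.1.trans_le hle
  have hpL : 0 < pLow μ p := pLow_pos hμ.1 hμ.2.le (by linarith [hp.1]) hp.2
  have hsign := sign_sub_of_strictAntiOn_div
    (strictAntiOn_phi_alphaH_div_phi_alphaL hk hkm hp hψ0 hψ.2)
    (fun _ => phi_alphaL_pos hkm hp hψ0 hψ.2) (mul_pos hpL (sub_pos.2 hτ.2))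
    ⟨hlam0.1.le, hle⟩ ((hf lam0).symm.trans hroot)
  refine ⟨fun lam h0 hlt => ?_, fun lam hlt hleψ => ?_⟩
  · rw [hf]; exact (hsign _ ⟨h0, hlt.le.trans hle⟩).1 hlt
  · rw [hf]; exact (hsign _ ⟨hlam0.1.le.trans hlt.le, hleψ⟩).2 hlt

/-- single crossing of the low-signal player's utility in λ. -/
theorem stmt3 (n B : ℕ) (μ p τ ψ : ℝ) (hn : 2 ≤ n) (hB1 : 2 ≤ B) (hB2 : B ≤ n)
    (hμ : μ ∈ Set.Ioo (0:ℝ) 1) (hp : p ∈ Set.Ioo (1/2 : ℝ) 1) (hτ : τ ∈ Set.Ioo (0:ℝ) 1)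
    (hψ : ψ ∈ Set.Icc (0:ℝ) 1)
    (f : ℝ → ℝ)
    (hf : ∀ lam, f lam =
      pLow μ p * (1 - τ) * phi (p * ψ + (1 - p) * lam) (n - 1) (B - 1)
        - (1 - pLow μ p) * τ * phi ((1 - p) * ψ + p * lam) (n - 1) (B - 1))
    (lam0 : ℝ) (hlam0 : lam0 ∈ Set.Ioo (0:ℝ) 1) (hle : lam0 ≤ ψ) (hroot : f lam0 = 0) :
    (∀ lam, 0 ≤ lam → lam < lam0 → 0 < f lam) ∧
    (∀ lam, lam0 < lam → lam ≤ ψ → f lam < 0) :=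
  stmt3_general n B μ p τ ψ hB1 hB2 hμ hp hτ hψ f hf lam0 hlam0 hle hroot
end

section
/- Let γ ∈ (0,1) be fixed and let {B_n} be any sequence of integers with 1 ≤ B_n ≤ n. Then lim_{n→∞} ( φ(γ, n−1, B_n−1) − φ(γ, n, B_n) ) = 0; i.e., asymptotically each player is non-pivotal: the probability that a Binomial(n−1,γ) variable is at least B_n−1 and the probability that a Binomial(n,γ) variable is at least B_n have the same limit behavior. -/
open Finset Filter

/-! By Pascal's rule, `φ(γ, m, k) - φ(γ, m + 1, k + 1) = (1 - γ) P(Bin(m, γ) = k)`, so it suffices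
that the largest binomial probability tends to `0`. The probabilities `k ↦ P(Bin(m, γ) = k)`
increase up to the mode `⌊γ (m + 1)⌋` and decrease after it. At the mode both `k` and `m - k` are
of order `m`, and Stirling's bounds on the factorials together with the Gibbs inequality
`γ ^ k (1 - γ) ^ j (k + j) ^ (k + j) ≤ k ^ k j ^ j` bound that probability by `C / √m`. -/

open scoped Nat

noncomputable def binomTerm (γ : ℝ) (m k : ℕ) : ℝ := (m.choose k : ℝ) * γ ^ k * (1 - γ) ^ (m - k)

namespace binomTerm

variable {γ : ℝ} {m k : ℕ}

lemma nonneg (h0 : 0 ≤ γ) (h1 : γ ≤ 1) : 0 ≤ binomTerm γ m k := by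
  have : 0 ≤ 1 - γ := by linarith
  unfold binomTerm; positivity

lemma eq_zero_of_lt (h : m < k) : binomTerm γ m k = 0 := by
  simp [binomTerm, Nat.choose_eq_zero_of_lt h]

lemma succ_succ (γ : ℝ) (m k : ℕ) :
    binomTerm γ (m + 1) (k + 1) = γ * binomTerm γ m k + (1 - γ) * binomTerm γ m (k + 1) := by
  unfold binomTerm
  rw [Nat.choose_succ_succ', Nat.cast_add, Nat.add_sub_add_right]
  rcases lt_or_ge k m with hk | hk
  · rw [show m - k = m - (k + 1) + 1 by omega]; ring
  · rw [Nat.choose_eq_zero_of_lt (by omega : m < k + 1)]; ring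

lemma succ_mul (γ : ℝ) (m k : ℕ) :
    binomTerm γ m (k + 1) * ((k + 1) * (1 - γ)) = binomTerm γ m k * ((m - k : ℕ) * γ) := by
  have hchoose : (m.choose (k + 1) : ℝ) * (k + 1) = m.choose k * (m - k : ℕ) := by
    exact_mod_cast Nat.choose_succ_right_eq m k
  rcases lt_or_ge k m with hk | hk
  · unfold binomTerm
    rw [show m - k = m - (k + 1) + 1 by omega] at hchoose ⊢
    linear_combination γ ^ k * (1 - γ) ^ (m - (k + 1)) * γ * (1 - γ) * hchoose
  · simp [eq_zero_of_lt (by omega : m < k + 1), Nat.sub_eq_zero_of_le hk]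

lemma le_succ (h1 : γ < 1) (h : (k + 1 : ℝ) ≤ γ * (m + 1)) :
    binomTerm γ m k ≤ binomTerm γ m (k + 1) := by
  have hk : k < m := by
    have : (k : ℝ) < m := by nlinarith
    exact_mod_cast this
  have hpos : (0 : ℝ) < (k + 1) * (1 - γ) := by
    have : (0 : ℝ) < 1 - γ := by linarith
    positivity
  have hγ : 0 ≤ γ := by nlinarith
  refine le_of_mul_le_mul_right ?_ hpos
  rw [succ_mul, Nat.cast_sub hk.le]
  exact mul_le_mul_of_nonneg_left (by nlinarith) (nonneg hγ h1.le)

lemma succ_le (h0 : 0 ≤ γ) (h1 : γ < 1) (h : γ * (m + 1) ≤ k + 1) :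
    binomTerm γ m (k + 1) ≤ binomTerm γ m k := by
  rcases lt_or_ge k m with hk | hk
  · have hpos : (0 : ℝ) < (k + 1) * (1 - γ) := by
      have : (0 : ℝ) < 1 - γ := by linarith
      positivity
    refine le_of_mul_le_mul_right ?_ hpos
    rw [succ_mul, Nat.cast_sub hk.le]
    exact mul_le_mul_of_nonneg_left (by nlinarith) (nonneg h0 h1.le)
  · rw [eq_zero_of_lt (by omega)]
    exact nonneg h0 h1.le

end binomTerm

lemma Nat.apply_le_apply_of_le_succ_of_succ_le {α : Type*} [Preorder α] {f : ℕ → α} {K : ℕ}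
    (hup : ∀ k < K, f k ≤ f (k + 1)) (hdown : ∀ k ≥ K, f (k + 1) ≤ f k) (k : ℕ) : f k ≤ f K := by
  rcases le_total k K with hk | hk
  · have hanti : Antitone fun i ↦ f (K - i) := antitone_nat_of_succ_le fun i ↦ by
      rcases lt_or_ge i K with hi | hi
      · simpa [show K - i = K - (i + 1) + 1 by omega] using hup (K - (i + 1)) (by omega)
      · rw [show K - (i + 1) = K - i by omega]
    simpa [Nat.sub_sub_self hk] using hanti (Nat.zero_le (K - k))
  · exact antitoneOn_nat_Ici_of_succ_le hdown (le_refl K) hk hk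

lemma binomTerm_le_binomTerm_floor {γ : ℝ} (h0 : 0 ≤ γ) (h1 : γ < 1) (m k : ℕ) :
    binomTerm γ m k ≤ binomTerm γ m ⌊γ * (m + 1)⌋₊ := by
  refine Nat.apply_le_apply_of_le_succ_of_succ_le (fun j hj ↦ ?_) (fun j hj ↦ ?_) k
  · refine binomTerm.le_succ h1 ?_
    have : (j + 1 : ℝ) ≤ ⌊γ * (m + 1)⌋₊ := by exact_mod_cast hj
    exact this.trans (Nat.floor_le (by positivity))
  · refine binomTerm.succ_le h0 h1 ((Nat.lt_floor_add_one _).le.trans ?_)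
    exact_mod_cast Nat.add_le_add_right hj 1

lemma phi_eq_sum (γ : ℝ) (m k : ℕ) : phi γ m k = ∑ j ∈ Icc k m, binomTerm γ m j := rfl

lemma phi_eq_binomTerm_add (γ : ℝ) {m k : ℕ} (hk : k ≤ m) :
    phi γ m k = binomTerm γ m k + phi γ m (k + 1) := by
  rw [phi_eq_sum, phi_eq_sum, Icc_add_one_left_eq_Ioc, ← Ioc_insert_left hk, sum_insert (by simp)]

lemma phi_succ_succ (γ : ℝ) {m k : ℕ} (hk : k ≤ m) :
    phi γ (m + 1) (k + 1) = γ * phi γ m k + (1 - γ) * phi γ m (k + 1) := by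
  have hshift (f : ℕ → ℝ) : ∑ j ∈ Icc (k + 1) (m + 1), f j = ∑ j ∈ Icc k m, f (j + 1) := by
    rw [← map_add_right_Icc, sum_map]; rfl
  have htop : ∑ j ∈ Icc (k + 1) (m + 1), binomTerm γ m j = phi γ m (k + 1) := by
    rw [sum_Icc_succ_top (by omega), binomTerm.eq_zero_of_lt (lt_add_one m), add_zero]; rfl
  rw [phi_eq_sum, hshift, ← htop, hshift]
  simp only [binomTerm.succ_succ, sum_add_distrib, ← mul_sum]
  rfl

lemma phi_sub_phi_succ_succ (γ : ℝ) {m k : ℕ} (hk : k ≤ m) :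
    phi γ m k - phi γ (m + 1) (k + 1) = (1 - γ) * binomTerm γ m k := by
  rw [phi_succ_succ γ hk, phi_eq_binomTerm_add γ hk]; ring

open Real

lemma factorial_le_exp_one_mul_sqrt {n : ℕ} (hn : n ≠ 0) :
    (n ! : ℝ) ≤ exp 1 * √n * (n / exp 1) ^ n := by
  obtain ⟨n, rfl⟩ := Nat.exists_eq_succ_of_ne_zero hn
  have hseq : Stirling.stirlingSeq (n + 1) ≤ exp 1 / √2 := by
    simpa using Stirling.stirlingSeq'_antitone (Nat.zero_le n)
  rw [Stirling.stirlingSeq, div_le_iff₀ (by positivity)] at hseq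
  calc ((n + 1) ! : ℝ) ≤ exp 1 / √2 * (√(2 * (n + 1 : ℕ)) * ((n + 1 : ℕ) / exp 1) ^ (n + 1)) :=
        hseq
    _ = exp 1 * √(n + 1 : ℕ) * ((n + 1 : ℕ) / exp 1) ^ (n + 1) := by
        rw [sqrt_mul zero_le_two]; field_simp

lemma pow_le_pow_mul_exp_sub {a : ℝ} (ha : 0 ≤ a) (k : ℕ) : a ^ k ≤ k ^ k * exp (a - k) := by
  rcases Nat.eq_zero_or_pos k with rfl | hk
  · simpa using one_le_exp ha
  have hk' : (0 : ℝ) < k := by exact_mod_cast hk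
  have hbase : a / k ≤ exp (a / k - 1) := by linarith [add_one_le_exp (a / k - 1)]
  calc a ^ k = k ^ k * (a / k) ^ k := by rw [div_pow]; field_simp
    _ ≤ k ^ k * exp (a / k - 1) ^ k := by gcongr
    _ = k ^ k * exp (a - k) := by rw [← exp_nat_mul]; field_simp

lemma pow_mul_one_sub_pow_mul_le_s18 {γ : ℝ} (h0 : 0 ≤ γ) (h1 : γ ≤ 1) (k j : ℕ) :
    γ ^ k * (1 - γ) ^ j * (k + j : ℕ) ^ (k + j) ≤ k ^ k * j ^ j := by
  set n : ℝ := ((k + j : ℕ) : ℝ)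
  have hn : 0 ≤ n := Nat.cast_nonneg _
  have h1' : 0 ≤ 1 - γ := by linarith
  calc γ ^ k * (1 - γ) ^ j * n ^ (k + j) = (γ * n) ^ k * ((1 - γ) * n) ^ j := by
        rw [pow_add, mul_pow, mul_pow]; ring
    _ ≤ (k ^ k * exp (γ * n - k)) * (j ^ j * exp ((1 - γ) * n - j)) := by
        gcongr
        · exact pow_le_pow_mul_exp_sub (by positivity) k
        · exact pow_le_pow_mul_exp_sub (by positivity) j
    _ = k ^ k * j ^ j := by
        rw [mul_mul_mul_comm, ← exp_add,
          show γ * n - k + ((1 - γ) * n - j) = 0 by simp only [n]; push_cast; ring, exp_zero,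
          mul_one]

lemma binomTerm_add_le {γ : ℝ} (h0 : 0 ≤ γ) (h1 : γ ≤ 1) {k j : ℕ} (hk : k ≠ 0) (hj : j ≠ 0) :
    binomTerm γ (k + j) k ≤ exp 1 * √(k + j : ℕ) / (2 * π * √(k * j)) := by
  have hk' : (0 : ℝ) < k := by positivity
  have hj' : (0 : ℝ) < j := by positivity
  set n : ℝ := ((k + j : ℕ) : ℝ)
  have hnum : ((k + j)! : ℝ) ≤ exp 1 * √n * (n ^ (k + j) / exp 1 ^ (k + j)) := by
    rw [← div_pow]; exact factorial_le_exp_one_mul_sqrt (by omega)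
  have hden : 2 * π * √(k * j) * (k ^ k * j ^ j / exp 1 ^ (k + j)) ≤ (k ! * j ! : ℝ) := by
    calc 2 * π * √(k * j) * (k ^ k * j ^ j / exp 1 ^ (k + j))
        = √(2 * π * k) * (k / exp 1) ^ k * (√(2 * π * j) * (j / exp 1) ^ j) := by
          have h2π : √(2 * π) * √(2 * π) = 2 * π := mul_self_sqrt (by positivity)
          have h2π0 : (0 : ℝ) ≤ 2 * π := by positivity
          rw [sqrt_mul hk'.le, sqrt_mul h2π0 k, sqrt_mul h2π0 j, div_pow, div_pow, pow_add]
          linear_combination -(√k * √j * (k ^ k * j ^ j / (exp 1 ^ k * exp 1 ^ j))) * h2π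
      _ ≤ k ! * j ! := by
          gcongr <;> exact Stirling.le_factorial_stirling _
  have hgibbs := pow_mul_one_sub_pow_mul_le_s18 h0 h1 k j
  calc binomTerm γ (k + j) k = (k + j)! / (k ! * j ! : ℝ) * (γ ^ k * (1 - γ) ^ j) := by
        rw [binomTerm, Nat.cast_add_choose, Nat.add_sub_cancel_left]; ring
    _ ≤ exp 1 * √n * (n ^ (k + j) / exp 1 ^ (k + j))
          / (2 * π * √(k * j) * (k ^ k * j ^ j / exp 1 ^ (k + j))) * (γ ^ k * (1 - γ) ^ j) := by
        have : 0 ≤ 1 - γ := by linarith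
        gcongr
    _ = exp 1 * √n / (2 * π * √(k * j))
          * (γ ^ k * (1 - γ) ^ j * n ^ (k + j) / (k ^ k * j ^ j)) := by
        field_simp
    _ ≤ exp 1 * √n / (2 * π * √(k * j)) := by
        refine mul_le_of_le_one_right (by positivity) ?_
        rw [div_le_one (by positivity)]
        exact hgibbs

lemma binomTerm_floor_le {γ : ℝ} (h0 : 0 < γ) (h1 : γ < 1) :
    ∀ᶠ m : ℕ in atTop, binomTerm γ m ⌊γ * (m + 1)⌋₊ ≤ exp 1 / (π * √(γ * (1 - γ))) / √m := by
  have h1' : 0 < 1 - γ := by linarith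
  filter_upwards [(tendsto_natCast_atTop_atTop.const_mul_atTop h0).eventually_ge_atTop 2,
    (tendsto_natCast_atTop_atTop.const_mul_atTop h1').eventually_ge_atTop 2] with m hγm hγm'
  set K := ⌊γ * (m + 1)⌋₊
  have hKle : (K : ℝ) ≤ γ * (m + 1) := Nat.floor_le (by positivity)
  have hKgt : γ * (m + 1) < K + 1 := Nat.lt_floor_add_one _
  have hKm : K ≤ m := by
    have : (K : ℝ) < m + 1 := by nlinarith
    exact Nat.lt_succ_iff.mp (by exact_mod_cast this)
  set J := m - K
  have hJ : (J : ℝ) = m - K := Nat.cast_sub hKm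
  have hK2 : γ * m / 2 ≤ K := by nlinarith
  have hJ2 : (1 - γ) * m / 2 ≤ J := by nlinarith
  have hK0 : K ≠ 0 := by
    have : (1 : ℝ) ≤ K := by linarith
    exact Nat.one_le_iff_ne_zero.mp (by exact_mod_cast this)
  have hJ0 : J ≠ 0 := by
    have : (1 : ℝ) ≤ J := by linarith
    exact Nat.one_le_iff_ne_zero.mp (by exact_mod_cast this)
  have hm : (0 : ℝ) < m := by nlinarith
  have hKJ : √(γ * (1 - γ)) * m / 2 ≤ √(K * J) := by
    rw [le_sqrt (by positivity) (by positivity), div_pow, mul_pow, sq_sqrt (by positivity)]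
    nlinarith [mul_le_mul hK2 hJ2 (by positivity) (by positivity)]
  calc binomTerm γ m K = binomTerm γ (K + J) K := by rw [Nat.add_sub_cancel' hKm]
    _ ≤ exp 1 * √(K + J : ℕ) / (2 * π * √(K * J)) := binomTerm_add_le h0.le h1.le hK0 hJ0
    _ ≤ exp 1 * √m / (2 * π * (√(γ * (1 - γ)) * m / 2)) := by
        rw [Nat.add_sub_cancel' hKm]
        gcongr
    _ = exp 1 / (π * √(γ * (1 - γ))) / √m := by
        have hsq : √(m : ℝ) * √m = m := mul_self_sqrt hm.le
        have : 0 < √(m : ℝ) := sqrt_pos.mpr hm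
        have : 0 < √(γ * (1 - γ)) := sqrt_pos.mpr (by positivity)
        field_simp
        linear_combination hsq

lemma tendsto_binomTerm_floor {γ : ℝ} (h0 : 0 < γ) (h1 : γ < 1) :
    Tendsto (fun m : ℕ ↦ binomTerm γ m ⌊γ * (m + 1)⌋₊) atTop (nhds 0) :=
  squeeze_zero' (.of_forall fun _ ↦ binomTerm.nonneg h0.le h1.le) (binomTerm_floor_le h0 h1)
    (tendsto_const_nhds.div_atTop (tendsto_sqrt_atTop.comp tendsto_natCast_atTop_atTop))

/-- asymptotic non-pivotality. -/
theorem stmt18 (γ : ℝ) (hγ : γ ∈ Set.Ioo (0:ℝ) 1) (B : ℕ → ℕ)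
    (hB : ∀ n, 1 ≤ n → 1 ≤ B n ∧ B n ≤ n) :
    Filter.Tendsto (fun n : ℕ => phi γ (n - 1) (B n - 1) - phi γ n (B n))
      Filter.atTop (nhds 0) := by
  obtain ⟨h0, h1⟩ := hγ
  have hdiff : ∀ᶠ n in atTop,
      phi γ (n - 1) (B n - 1) - phi γ n (B n) = (1 - γ) * binomTerm γ (n - 1) (B n - 1) := by
    filter_upwards [eventually_ge_atTop 1] with n hn
    obtain ⟨hB1, hBn⟩ := hB n hn
    have := phi_sub_phi_succ_succ γ (m := n - 1) (k := B n - 1) (by omega)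
    rwa [Nat.sub_add_cancel hn, Nat.sub_add_cancel hB1] at this
  refine squeeze_zero' ?_ ?_ ((tendsto_binomTerm_floor h0 h1).comp (tendsto_sub_atTop_nat 1))
  · filter_upwards [hdiff] with n hn
    rw [hn]
    exact mul_nonneg (by linarith) (binomTerm.nonneg h0.le h1.le)
  · filter_upwards [hdiff] with n hn
    rw [hn]
    exact (mul_le_of_le_one_left (binomTerm.nonneg h0.le h1.le) (by linarith)).trans
      (binomTerm_le_binomTerm_floor h0.le h1 _ _)
end
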